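/- Let n ≥ 1, m ≥ 1, and a* ∈ {0,1,…,m}^n. Define a ∈ ℤ^d by a_i = a*_i for i ∈ [n] and a_{ij} = min(a*_i, a*_j) for all 2-element subsets {i,j} of [n], and for each b ∈ [m] set S^b = {i ∈ [n] : a*_i ≥ b}. Then S^m ⊆ S^{m−1} ⊆ ⋯ ⊆ S^1 (the sets are nested) and a = ∑_{b=1}^m a_{S^b}. In particular, a ∈ m·P(K_n) ∩ ℤ^d and π(a) = a*. -/

import Mathlib

/-! The level sets `S^b = {i | b ≤ a*_i}` decrease in `b`, so a vertex `i` lies in exactly `a*_i`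
of them and an edge `{i, j}` in exactly `min (a*_i) (a*_j)`: this gives `a = ∑_b a_{S^b}`.
A sum of `m` points of the convex set `P(K_n)` is `m` times their barycentre, so `a ∈ m·P(K_n)`. -/

/-- Edges of the complete graph `K_n`: 2-element subsets of `Fin n`,
encoded as non-diagonal elements of `Sym2 (Fin n)`. -/
abbrev EdgeKn (n : ℕ) : Type := {e : Sym2 (Fin n) // ¬ e.IsDiag}

/-- Coordinates of `ℝ^d`, `d = n + n(n-1)/2`: vertices and edges of `K_n`. -/
abbrev CoordKn (n : ℕ) : Type := Fin n ⊕ EdgeKn n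

/-- The edge coordinate `{i,j}` for distinct `i, j`. -/
def edgeCoord {n : ℕ} (i j : Fin n) (h : i ≠ j) : CoordKn n :=
  Sum.inr ⟨s(i, j), fun hd => h (Sym2.mk_isDiag_iff.mp hd)⟩

/-- The characteristic vector `a_S` of `S ⊆ [n]`. -/
def charVec {n : ℕ} (S : Finset (Fin n)) : CoordKn n → ℝ
  | Sum.inl i => if i ∈ S then 1 else 0
  | Sum.inr e => Sym2.lift ⟨fun i j => if i ∈ S ∧ j ∈ S then (1 : ℝ) else 0,
      fun i j => by simp [and_comm]⟩ e.1

/-- The standard inner product on `ℝ^d`. -/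
def dotP {n : ℕ} (x y : CoordKn n → ℝ) : ℝ := ∑ c, x c * y c

/-- `S` is in the demand set `D(w, p)`: it maximizes `⟨w - p, a_T⟩` over all `T ⊆ [n]`. -/
def InDemand {n : ℕ} (w p : CoordKn n → ℝ) (S : Finset (Fin n)) : Prop :=
  ∀ T : Finset (Fin n),
    dotP (fun c => w c - p c) (charVec T) ≤ dotP (fun c => w c - p c) (charVec S)

/-- The correlation polytope `P(K_n)`. -/
def corrPolytope (n : ℕ) : Set (CoordKn n → ℝ) :=
  convexHull ℝ (Set.range (charVec (n := n)))

/-- The dilate `m·A` of a set `A ⊆ ℝ^d`. -/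
def dilate {n : ℕ} (m : ℕ) (A : Set (CoordKn n → ℝ)) : Set (CoordKn n → ℝ) :=
  {x | ∃ y ∈ A, x = (m : ℝ) • y}

/-- `F` is a face of `P(K_n)`: the set of maximizers of some linear functional `⟨c, ·⟩`. -/
def IsFaceOf {n : ℕ} (F : Set (CoordKn n → ℝ)) : Prop :=
  ∃ c : CoordKn n → ℝ,
    F = {x | x ∈ corrPolytope n ∧ ∀ y ∈ corrPolytope n, dotP c y ≤ dotP c x}

open Finset Pointwise

theorem Convex.sum_mem_card_smul {𝕜 E ι : Type*} [Field 𝕜] [LinearOrder 𝕜]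
    [IsStrictOrderedRing 𝕜] [AddCommGroup E] [Module 𝕜 E] {s : Set E} (hs : Convex 𝕜 s)
    (hne : s.Nonempty) (t : Finset ι) {z : ι → E} (hz : ∀ i ∈ t, z i ∈ s) :
    ∑ i ∈ t, z i ∈ (#t : 𝕜) • s := by
  rcases t.eq_empty_or_nonempty with rfl | ht
  · simp [Set.zero_smul_set hne]
  have hcard : (#t : 𝕜) ≠ 0 := by exact_mod_cast ht.card_ne_zero
  have hmem : t.centerMass (fun _ => (1 : 𝕜)) z ∈ s :=
    hs.centerMass_mem (fun _ _ => zero_le_one) (by simpa using ht.card_pos) hz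
  refine ⟨_, hmem, ?_⟩
  simp [Finset.centerMass, smul_smul, hcard]

lemma sum_fin_ite_succ_le (m k : ℕ) (hk : k ≤ m) :
    ∑ b : Fin m, (if (b : ℕ) + 1 ≤ k then (1 : ℝ) else 0) = k := by
  simp only [Nat.succ_le_iff, Finset.sum_boole, Fin.card_filter_val_lt, min_eq_right hk]

lemma CoordKn.cases {n : ℕ} (c : CoordKn n) :
    (∃ i, c = Sum.inl i) ∨ ∃ i j h, c = edgeCoord i j h := by
  rcases c with i | ⟨e, he⟩
  · exact .inl ⟨i, rfl⟩
  · induction e using Sym2.ind with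
    | _ i j => exact .inr ⟨i, j, fun h => he (by simp [h]), rfl⟩

lemma CoordKn.funext {n : ℕ} {x y : CoordKn n → ℝ} (hv : ∀ i, x (Sum.inl i) = y (Sum.inl i))
    (he : ∀ i j h, x (edgeCoord i j h) = y (edgeCoord i j h)) : x = y := by
  funext c
  rcases c.cases with ⟨i, rfl⟩ | ⟨i, j, h, rfl⟩
  exacts [hv i, he i j h]

@[simp] lemma charVec_inl {n : ℕ} (S : Finset (Fin n)) (i : Fin n) :
    charVec S (Sum.inl i) = if i ∈ S then 1 else 0 := rfl

@[simp] lemma charVec_edgeCoord {n : ℕ} (S : Finset (Fin n)) (i j : Fin n) (h : i ≠ j) :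
    charVec S (edgeCoord i j h) = if i ∈ S ∧ j ∈ S then 1 else 0 := rfl

lemma sum_charVec_mem_dilate {n m : ℕ} (S : Fin m → Finset (Fin n)) :
    ∑ b, charVec (S b) ∈ dilate m (corrPolytope n) := by
  obtain ⟨y, hy, hy_eq⟩ :=
    (convex_convexHull ℝ (Set.range (charVec (n := n)))).sum_mem_card_smul
    ((Set.range_nonempty _).mono (subset_convexHull ℝ _)) univ
    (fun b _ => subset_convexHull ℝ _ ⟨S b, rfl⟩)
  exact ⟨y, hy, by simpa using hy_eq.symm⟩

theorem stmt12_general (n m : ℕ)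
    (astar : Fin n → ℕ) (ha : ∀ i, astar i ≤ m)
    (a : CoordKn n → ℝ)
    (hav : ∀ i, a (Sum.inl i) = (astar i : ℝ))
    (hae : ∀ (i j : Fin n) (h : i ≠ j),
      a (edgeCoord i j h) = ((min (astar i) (astar j) : ℕ) : ℝ))
    (S : Fin m → Finset (Fin n))
    (hS : ∀ (b : Fin m) (i : Fin n), i ∈ S b ↔ (b : ℕ) + 1 ≤ astar i) :
    (∀ b b' : Fin m, b ≤ b' → S b' ⊆ S b) ∧
    (∑ b, charVec (S b)) = a ∧
    a ∈ dilate m (corrPolytope n) ∧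
    (∀ c, ∃ z : ℤ, a c = (z : ℝ)) ∧
    (∀ i, a (Sum.inl i) = (astar i : ℝ)) := by
  have hsum : (∑ b, charVec (S b)) = a := by
    refine CoordKn.funext (fun i => ?_) (fun i j h => ?_) <;>
      simp only [Finset.sum_apply, charVec_inl, charVec_edgeCoord, hS, hav, hae, ← le_min_iff]
    · exact sum_fin_ite_succ_le m _ (ha i)
    · exact sum_fin_ite_succ_le m _ ((min_le_left _ _).trans (ha i))
  have hnested : ∀ b b' : Fin m, b ≤ b' → S b' ⊆ S b := fun b b' hbb' i => by
    simp only [hS]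
    exact (Nat.add_le_add_right hbb' 1).trans
  have hint : ∀ c, ∃ z : ℤ, a c = (z : ℝ) := fun c => by
    rcases c.cases with ⟨i, rfl⟩ | ⟨i, j, h, rfl⟩
    exacts [⟨astar i, hav i⟩, ⟨min (astar i) (astar j), by simp [hae]⟩]
  exact ⟨hnested, hsum, hsum ▸ sum_charVec_mem_dilate S, hint, hav⟩

/-- Let `a* ∈ {0,1,…,m}^n`, let `a ∈ ℤ^d` be given by `a_i = a*_i`,
`a_{ij} = min(a*_i, a*_j)`, and for `b ∈ [m]` let `S^b = {i : a*_i ≥ b}`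
(here `b ∈ Fin m` encodes the value `b + 1 ∈ {1, …, m}`). Then the `S^b` are
nested, `a = ∑_b a_{S^b}`, and in particular `a ∈ m·P(K_n) ∩ ℤ^d` with
`π(a) = a*`. -/
theorem stmt12 (n m : ℕ) (hn : 1 ≤ n) (hm : 1 ≤ m)
    (astar : Fin n → ℕ) (ha : ∀ i, astar i ≤ m)
    (a : CoordKn n → ℝ)
    (hav : ∀ i, a (Sum.inl i) = (astar i : ℝ))
    (hae : ∀ (i j : Fin n) (h : i ≠ j),
      a (edgeCoord i j h) = ((min (astar i) (astar j) : ℕ) : ℝ))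
    (S : Fin m → Finset (Fin n))
    (hS : ∀ (b : Fin m) (i : Fin n), i ∈ S b ↔ (b : ℕ) + 1 ≤ astar i) :
    (∀ b b' : Fin m, b ≤ b' → S b' ⊆ S b) ∧
    (∑ b, charVec (S b)) = a ∧
    a ∈ dilate m (corrPolytope n) ∧
    (∀ c, ∃ z : ℤ, a c = (z : ℝ)) ∧
    (∀ i, a (Sum.inl i) = (astar i : ℝ)) :=
  stmt12_general n m astar ha a hav hae S hS
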